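/- arXiv:2401.00362 — 7 statements merged into one kernel-verified Lean document; each statement's English description precedes it below -/
import Mathlib

section
/- Let M be an n×n real symmetric matrix and let u ≠ v be twin indices with respect to M (that is, M_{u,w} = M_{v,w} for all w ∉ {u,v} and M_{u,u} = M_{v,v}). If u is not sedentary, i.e. inf_{t>0} |U(t)_{u,u}| = 0, then pretty good state transfer occurs between u and v: there is a sequence of times (t_k) with |U(t_k)_{u,v}| → 1. Consequently every twin vertex is either sedentary or involved in pretty good state transfer. -/
/-- The continuous-time quantum walk transition matrix `U(t) = exp(itM)` of a real
symmetric matrix `M`, as a complex matrix. -/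
noncomputable def qwU {V : Type*} [Fintype V] [DecidableEq V]
    (M : Matrix V V ℝ) (t : ℝ) : Matrix V V ℂ :=
  NormedSpace.exp ((Complex.I * t) • M.map (↑· : ℝ → ℂ))

/-!
For twins `u, v` the vector `e_u - e_v` is an eigenvector of `M`, hence of every `U(t)`,
with an eigenvalue of modulus one. Reading off its `u`-coordinate gives
`|U(t)_{u,u} - U(t)_{u,v}| = 1` for all `t`, so along times where `U(t)_{u,u} → 0` the
entry `U(t)_{u,v}` has modulus tending to one.
-/

open Filter Topology Matrix

namespace Matrix

variable {m : Type*} [Fintype m] [DecidableEq m]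

theorem pow_mulVec_of_mulVec_eq_smul {R : Type*} [CommSemiring R] {A : Matrix m m R}
    {x : m → R} {c : R} (h : A *ᵥ x = c • x) (k : ℕ) : (A ^ k) *ᵥ x = c ^ k • x := by
  induction k with
  | zero => simp
  | succ k ih => rw [pow_succ, ← mulVec_mulVec, h, mulVec_smul, ih, smul_smul, pow_succ']

open scoped Norms.Operator in
theorem exp_mulVec_of_mulVec_eq_smul {𝕂 : Type*} [RCLike 𝕂] {A : Matrix m m 𝕂}
    {x : m → 𝕂} {c : 𝕂} (h : A *ᵥ x = c • x) :
    NormedSpace.exp A *ᵥ x = NormedSpace.exp c • x := by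
  have hA := (NormedSpace.exp_series_hasSum_exp' (𝕂 := 𝕂) A).map
    (mulVec.addMonoidHomLeft x) (continuous_id.matrix_mulVec continuous_const)
  have hc := (NormedSpace.exp_series_hasSum_exp' (𝕂 := 𝕂) c).smul_const x
  refine hA.unique ?_
  convert hc using 2 with k
  simp [mulVec.addMonoidHomLeft, smul_mulVec, pow_mulVec_of_mulVec_eq_smul h, smul_smul]

theorem mulVec_single_sub_single_of_twins {R : Type*} [CommRing R] {M : Matrix m m R}
    (hM : M.IsSymm) {u v : m} (huv : u ≠ v)
    (htwin : ∀ w, w ≠ u → w ≠ v → M u w = M v w) (hdiag : M u u = M v v) :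
    M *ᵥ (Pi.single u 1 - Pi.single v 1) =
      (M u u - M u v) • (Pi.single u 1 - Pi.single v 1) := by
  ext i
  simp only [mulVec_sub, mulVec_single_one, Pi.sub_apply, Pi.smul_apply, col_apply, smul_eq_mul]
  rw [hM.apply u i, hM.apply v i]
  rcases eq_or_ne i u with rfl | hiu
  · simp [huv.symm, hM.apply i v]
  rcases eq_or_ne i v with rfl | hiv
  · simp [hiu, hdiag]
  · simp [hiu, hiv, htwin i hiu hiv]

end Matrix

theorem norm_qwU_sub_of_twins {V : Type*} [Fintype V] [DecidableEq V] {M : Matrix V V ℝ}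
    (hM : M.IsSymm) {u v : V} (huv : u ≠ v)
    (htwin : ∀ w, w ≠ u → w ≠ v → M u w = M v w) (hdiag : M u u = M v v) (t : ℝ) :
    ‖qwU M t u u - qwU M t u v‖ = 1 := by
  have hMx := mulVec_single_sub_single_of_twins (hM.map (↑· : ℝ → ℂ)) huv
    (fun w hwu hwv => by simp [htwin w hwu hwv]) (by simp [hdiag])
  have hUx : qwU M t *ᵥ (Pi.single u 1 - Pi.single v 1) =
      NormedSpace.exp (Complex.I * t * ((M u u - M u v : ℝ) : ℂ)) •
        (Pi.single u 1 - Pi.single v 1) := by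
    refine exp_mulVec_of_mulVec_eq_smul ?_
    rw [smul_mulVec, hMx, smul_smul]
    simp
  have hu := congrFun hUx u
  simp only [mulVec_sub, mulVec_single_one, Pi.sub_apply, col_apply, Pi.smul_apply,
    smul_eq_mul, Pi.single_eq_same, Pi.single_eq_of_ne huv, sub_zero, mul_one] at hu
  rw [hu, ← Complex.exp_eq_exp_ℂ, mul_assoc, ← Complex.ofReal_mul,
    Complex.norm_exp_I_mul_ofReal]

theorem tendsto_norm_of_norm_sub_eq {ι E : Type*} [SeminormedAddCommGroup E] {l : Filter ι}
    {f g : ι → E} {r : ℝ} (hfg : ∀ i, ‖f i - g i‖ = r) (hf : Tendsto f l (𝓝 0)) :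
    Tendsto (fun i => ‖g i‖) l (𝓝 r) := by
  have hdist : ∀ i, dist ‖g i‖ r ≤ ‖f i‖ := fun i => by
    simpa [← hfg i, Real.dist_eq, norm_sub_rev (f i)] using abs_norm_sub_norm_le (g i) (g i - f i)
  exact tendsto_iff_dist_tendsto_zero.2 <|
    squeeze_zero (fun _ => dist_nonneg) hdist (tendsto_zero_iff_norm_tendsto_zero.1 hf)

theorem exists_seq_tendsto_zero_of_sInf_image_norm_eq_zero {α E : Type*}
    [SeminormedAddCommGroup E] {f : α → E} {s : Set α} (hs : s.Nonempty)
    (hf : sInf ((fun a => ‖f a‖) '' s) = 0) :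
    ∃ a : ℕ → α, (∀ k, a k ∈ s) ∧ Tendsto (f ∘ a) atTop (𝓝 0) := by
  obtain ⟨y, -, hy, hys⟩ := exists_seq_tendsto_sInf (hs.image fun a => ‖f a‖)
    ⟨0, Set.forall_mem_image.2 fun _ _ => norm_nonneg _⟩
  choose a has hay using hys
  refine ⟨a, has, tendsto_zero_iff_norm_tendsto_zero.2 ?_⟩
  simpa [Function.comp_def, hay, hf] using hy

/-- If `u` and `v` are twins and `u` is not sedentary (the infimum over positive times of
`|U(t)_{u,u}|` is zero), then pretty good state transfer occurs between `u` and `v`.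
Consequently every twin vertex is either sedentary or involved in pretty good state
transfer. -/
theorem twin_not_sedentary_implies_pgst {n : ℕ} (M : Matrix (Fin n) (Fin n) ℝ)
    (hM : M.IsSymm) (u v : Fin n) (huv : u ≠ v)
    (htwin : ∀ w : Fin n, w ≠ u → w ≠ v → M u w = M v w)
    (hdiag : M u u = M v v)
    (hnotsed : sInf ((fun t => ‖qwU M t u u‖) '' Set.Ioi (0 : ℝ)) = 0) :
    ∃ tk : ℕ → ℝ,
      Filter.Tendsto (fun k => ‖qwU M (tk k) u v‖) Filter.atTop (nhds 1) := by
  obtain ⟨tk, -, htk⟩ := exists_seq_tendsto_zero_of_sInf_image_norm_eq_zero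
    (f := fun t => qwU M t u u) Set.nonempty_Ioi hnotsed
  exact ⟨tk, tendsto_norm_of_norm_sub_eq
    (fun _ => norm_qwU_sub_of_twins hM huv htwin hdiag _) htk⟩
end

section
/- Let M be an n×n real symmetric matrix, T a twin set with respect to M containing u, with common diagonal entry ω and common off-diagonal entry η among vertices of T, and let θ = ω − η. Let E_θ be the matrix of the orthogonal projection of ℝ^n onto the eigenspace ker(M − θI). Then (E_θ)_{u,u} ≥ 1 − 1/|T|, and for all real t, |U(t)_{u,u}| ≥ 2(E_θ)_{u,u} − 1. In particular, if |T| ≥ 3 then |U(t)_{u,u}| ≥ 1 − 2/|T| for all t. -/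
open Matrix Finset
open scoped InnerProductSpace

theorem NormedSpace.exp_mul_of_mul_eq_smul {𝕂 𝔸 : Type*} [RCLike 𝕂] [NormedRing 𝔸]
    [NormedAlgebra 𝕂 𝔸] [CompleteSpace 𝔸] {x e : 𝔸} {c : 𝕂} (h : x * e = c • e) :
    exp x * e = exp c • e := by
  have hpow (n : ℕ) : x ^ n * e = c ^ n • e := by
    induction n with
    | zero => simp
    | succ n ih => rw [pow_succ, mul_assoc, h, mul_smul_comm, ih, smul_smul, pow_succ']
  refine ((exp_series_hasSum_exp' (𝕂 := 𝕂) x).mul_right e).unique ?_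
  simpa only [smul_mul_assoc, hpow, smul_assoc] using
    (exp_series_hasSum_exp' (𝕂 := 𝕂) c).smul_const e

theorem ContinuousLinearMap.two_mul_re_inner_sub_norm_sq_le_norm_inner
    {𝕜 H : Type*} [RCLike 𝕜] [NormedAddCommGroup H] [InnerProductSpace 𝕜 H] [CompleteSpace H]
    {U P : H →L[𝕜] H} (hU : U ∈ unitary (H →L[𝕜] H)) (hP : IsStarProjection P) {c : 𝕜}
    (hc : ‖c‖ = 1) (hUP : U * P = c • P) (v : H) :
    2 * RCLike.re ⟪v, P v⟫_𝕜 - ‖v‖ ^ 2 ≤ ‖⟪v, U v⟫_𝕜‖ := by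
  set p := P v
  set w := v - p
  have hv : v = p + w := (add_sub_cancel p v).symm
  have hPw : P w = 0 := by
    simp only [w, p, map_sub, sub_eq_zero]
    exact (congrArg (· v) hP.isIdempotentElem).symm
  have hpw : ⟪p, w⟫_𝕜 = 0 := by
    rw [show ⟪p, w⟫_𝕜 = ⟪v, P w⟫_𝕜 from hP.isSelfAdjoint.isSymmetric v w, hPw, inner_zero_right]
  have hwp : ⟪w, p⟫_𝕜 = 0 := by rw [← inner_conj_symm, hpw, map_zero]
  have hUp : U p = c • p := congrArg (fun T : H →L[𝕜] H => T v) hUP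
  -- `U` preserves `⟪p, w⟫ = 0` and multiplies `p` by the nonzero scalar `c`.
  have hpUw : ⟪p, U w⟫_𝕜 = 0 := by
    have h := Unitary.inner_map_map ⟨U, hU⟩ p w
    simp only at h
    rw [hUp, inner_smul_left, hpw, mul_eq_zero] at h
    exact h.resolve_left (by rw [map_eq_zero, ← norm_eq_zero, hc]; exact one_ne_zero)
  have hinner : ⟪v, U v⟫_𝕜 = c * ⟪p, p⟫_𝕜 + ⟪w, U w⟫_𝕜 := by
    rw [hv, map_add, hUp]
    simp only [inner_add_left, inner_add_right, inner_smul_right, hpUw, hwp]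
    ring
  have hcp : ‖c * ⟪p, p⟫_𝕜‖ = ‖p‖ ^ 2 := by
    rw [norm_mul, hc, one_mul, inner_self_eq_norm_sq_to_K]; simp
  have hwUw : ‖⟪w, U w⟫_𝕜‖ ≤ ‖w‖ ^ 2 :=
    calc _ ≤ ‖w‖ * ‖U w‖ := norm_inner_le_norm _ _
      _ = ‖w‖ ^ 2 := by rw [Unitary.norm_map ⟨U, hU⟩, sq]
  have hre : RCLike.re ⟪v, p⟫_𝕜 = ‖p‖ ^ 2 := by
    rw [hv, inner_add_left, hwp, add_zero, inner_self_eq_norm_sq]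
  have hpyth : ‖v‖ ^ 2 = ‖p‖ ^ 2 + ‖w‖ ^ 2 := by
    rw [hv, sq, sq, sq, norm_add_sq_eq_norm_sq_add_norm_sq_of_inner_eq_zero _ _ hpw]
  have := norm_sub_norm_le (c * ⟪p, p⟫_𝕜) (-⟪w, U w⟫_𝕜)
  rw [sub_neg_eq_add, ← hinner, norm_neg, hcp] at this
  rw [hre]
  linarith

namespace Matrix

variable {ι R : Type*}

theorem IsSymm.isSelfAdjoint_map_ofReal {A : Matrix ι ι ℝ} (hA : A.IsSymm) :
    IsSelfAdjoint (A.map (↑· : ℝ → ℂ)) := by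
  ext i j
  simp [hA.apply i j]

variable [Fintype ι]

theorem inner_single_toEuclideanCLM_single [RCLike R] [DecidableEq ι] (A : Matrix ι ι R)
    (u : ι) :
    ⟪EuclideanSpace.single u 1, toEuclideanCLM (𝕜 := R) A (EuclideanSpace.single u 1)⟫_R =
      A u u := by
  simp [EuclideanSpace.inner_single_left]

theorem two_mul_re_apply_self_sub_one_le_norm [RCLike R] [DecidableEq ι] {U P : Matrix ι ι R}
    (hU : U ∈ unitary (Matrix ι ι R)) (hP : IsStarProjection P) {c : R} (hc : ‖c‖ = 1)
    (hUP : U * P = c • P) (u : ι) :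
    2 * RCLike.re (P u u) - 1 ≤ ‖U u u‖ := by
  have := ContinuousLinearMap.two_mul_re_inner_sub_norm_sq_le_norm_inner
    (Unitary.map_mem (toEuclideanCLM (n := ι) (𝕜 := R)) hU) (hP.map toEuclideanCLM) hc
    (by rw [← map_mul, hUP, map_smul]) (EuclideanSpace.single u 1)
  simpa [inner_single_toEuclideanCLM_single] using this

theorem IsSymm.mulVec_single_sub_single [DecidableEq ι] [CommRing R] {M : Matrix ι ι R}
    (hM : M.IsSymm) {u v : ι} (huv : u ≠ v) (hdiag : M u u = M v v)
    (hrow : ∀ w, w ≠ u → w ≠ v → M u w = M v w) :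
    M *ᵥ (Pi.single u 1 - Pi.single v 1) =
      (M u u - M u v) • (Pi.single u 1 - Pi.single v 1) := by
  ext w
  simp only [mulVec_sub, mulVec_single_one, Pi.sub_apply, Pi.smul_apply, Pi.single_apply,
    smul_eq_mul]
  rcases eq_or_ne w u with rfl | hwu
  · simp [huv]
  rcases eq_or_ne w v with rfl | hwv
  · simp [hwu, hM.apply, hdiag]
  · simp [hwu, hwv, ← hM.apply w, hrow w hwu hwv]

theorem mul_eq_smul_of_mulVec_eq_self [CommSemiring R] {M E : Matrix ι ι R} {θ : R}
    (hE : E * E = E) (hfix : ∀ x, E *ᵥ x = x → M *ᵥ x = θ • x) : M * E = θ • E := by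
  ext i j
  have hcol : E *ᵥ (fun w => E w j) = fun w => E w j := by
    ext w; simpa [mul_apply, mulVec, dotProduct] using congrFun (congrFun hE w) j
  simpa [mul_apply, mulVec, dotProduct] using congrFun (hfix _ hcol) i

theorem IsSymm.apply_self_eq_sum_sq [CommSemiring R] {E : Matrix ι ι R} (hE : E.IsSymm)
    (hEE : E * E = E) (u : ι) : E u u = ∑ j, E u j ^ 2 := by
  conv_lhs => rw [← hEE, mul_apply]
  simp_rw [sq, hE.apply u]

theorem map_ofReal_mul (A B : Matrix ι ι ℝ) :
    (A * B).map (↑· : ℝ → ℂ) = A.map (↑· : ℝ → ℂ) * B.map (↑· : ℝ → ℂ) :=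
  Matrix.map_mul (f := Complex.ofRealHom)

theorem IsSymm.isStarProjection_map_ofReal {E : Matrix ι ι ℝ} (hE : E.IsSymm)
    (hEE : E * E = E) : IsStarProjection (E.map (↑· : ℝ → ℂ)) where
  isIdempotentElem := by rw [IsIdempotentElem, ← map_ofReal_mul, hEE]
  isSelfAdjoint := hE.isSelfAdjoint_map_ofReal

end Matrix

theorem one_sub_inv_le_of_sq_add_mul_sq_le {a k : ℝ} (hk : 1 ≤ k)
    (h : a ^ 2 + (k - 1) * (a - 1) ^ 2 ≤ a) : 1 - 1 / k ≤ a := by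
  rw [one_sub_div (by positivity), div_le_iff₀ (by positivity)]
  -- `a - a² - (k - 1)(a - 1)² = (1 - a)(k a - (k - 1))`, and `a ≤ 1` since `a² ≤ a`.
  rcases eq_or_lt_of_le (show a ≤ 1 by nlinarith) with rfl | ha
  · linarith
  · nlinarith

theorem Matrix.IsSymm.one_sub_inv_card_le_apply_self {ι : Type*} [Fintype ι] [DecidableEq ι]
    {E : Matrix ι ι ℝ} (hE : E.IsSymm) (hEE : E * E = E) {T : Finset ι} {u : ι} (hu : u ∈ T)
    (hfix : ∀ v ∈ T, v ≠ u → E u u - E u v = 1) : 1 - 1 / (#T : ℝ) ≤ E u u := by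
  refine one_sub_inv_le_of_sq_add_mul_sq_le (by exact_mod_cast card_pos.mpr ⟨u, hu⟩) ?_
  have hrest : ∑ v ∈ T.erase u, E u v ^ 2 = (#T - 1) * (E u u - 1) ^ 2 := by
    rw [sum_congr rfl fun v hv => ?_, sum_const, nsmul_eq_mul, cast_card_erase_of_mem hu]
    rw [← hfix v (mem_of_mem_erase hv) (ne_of_mem_erase hv)]
    ring
  calc E u u ^ 2 + (#T - 1) * (E u u - 1) ^ 2 = ∑ v ∈ T, E u v ^ 2 := by
        rw [← add_sum_erase T _ hu, hrest]
    _ ≤ ∑ v, E u v ^ 2 := sum_le_sum_of_subset_of_nonneg (subset_univ T) fun _ _ _ => sq_nonneg _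
    _ = E u u := (hE.apply_self_eq_sum_sq hEE u).symm

section QuantumWalk

variable {V : Type*} [Fintype V] [DecidableEq V] {M : Matrix V V ℝ}

theorem qwU_mem_unitary (hM : M.IsSymm) (t : ℝ) : qwU M t ∈ unitary (Matrix V V ℂ) := by
  set X := (Complex.I * t) • M.map (↑· : ℝ → ℂ)
  have hstar : star X = -X := by
    rw [star_smul, hM.isSelfAdjoint_map_ofReal.star_eq]
    simp [X, neg_smul]
  rw [Unitary.mem_iff, qwU, star_eq_conjTranspose, ← exp_conjTranspose, ← star_eq_conjTranspose,
    hstar, ← exp_add_of_commute _ _ (Commute.refl X).neg_left,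
    ← exp_add_of_commute _ _ (Commute.refl X).neg_right]
  simp

open scoped Matrix.Norms.Operator in
theorem qwU_mul_of_mul_eq_smul {E : Matrix V V ℝ} {θ : ℝ} (h : M * E = θ • E) (t : ℝ) :
    qwU M t * E.map (↑· : ℝ → ℂ) = Complex.exp (Complex.I * t * θ) • E.map (↑· : ℝ → ℂ) := by
  rw [Complex.exp_eq_exp_ℂ]
  refine NormedSpace.exp_mul_of_mul_eq_smul ?_
  rw [smul_mul_assoc, ← map_ofReal_mul, h, map_smul' _ θ E Complex.ofReal_mul, smul_smul]

end QuantumWalk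

theorem twin_set_projection_bound_general {n : ℕ} (M : Matrix (Fin n) (Fin n) ℝ) (hM : M.IsSymm)
    (T : Finset (Fin n)) (ω η : ℝ) (u : Fin n) (huT : u ∈ T)
    (htwin : ∀ x ∈ T, ∀ y ∈ T, x ≠ y → ∀ w ∉ T, M x w = M y w)
    (hdiag : ∀ x ∈ T, M x x = ω)
    (hoff : ∀ x ∈ T, ∀ y ∈ T, x ≠ y → M x y = η)
    (E : Matrix (Fin n) (Fin n) ℝ) (hE1 : E.IsSymm) (hE2 : E * E = E)
    (hE3 : ∀ x : Fin n → ℝ, E.mulVec x = x ↔ M.mulVec x = (ω - η) • x) :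
    1 - 1 / (T.card : ℝ) ≤ E u u ∧
    (∀ t : ℝ, 2 * E u u - 1 ≤ ‖qwU M t u u‖) ∧
    (3 ≤ T.card → ∀ t : ℝ, 1 - 2 / (T.card : ℝ) ≤ ‖qwU M t u u‖) := by
  have hfix : ∀ v ∈ T, v ≠ u → E u u - E u v = 1 := by
    intro v hv hvu
    have heig : M *ᵥ (Pi.single u 1 - Pi.single v 1) =
        (ω - η) • (Pi.single u 1 - Pi.single v 1) := by
      rw [← hdiag u huT, ← hoff u huT v hv hvu.symm]
      refine hM.mulVec_single_sub_single hvu.symm (by rw [hdiag u huT, hdiag v hv])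
        fun w hwu hwv => ?_
      by_cases hw : w ∈ T
      · rw [hoff u huT w hw hwu.symm, hoff v hv w hw hwv.symm]
      · exact htwin u huT v hv hvu.symm w hw
    simpa [mulVec_sub, mulVec_single_one, hvu] using congrFun ((hE3 _).2 heig) u
  have hwalk (t : ℝ) : 2 * E u u - 1 ≤ ‖qwU M t u u‖ := by
    simpa using two_mul_re_apply_self_sub_one_le_norm (qwU_mem_unitary hM t)
      (hE1.isStarProjection_map_ofReal hE2) (by simp [Complex.norm_exp])
      (qwU_mul_of_mul_eq_smul (mul_eq_smul_of_mulVec_eq_self hE2 fun x => (hE3 x).1) t) u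
  have hdiagE := hE1.one_sub_inv_card_le_apply_self hE2 huT hfix
  refine ⟨hdiagE, hwalk, fun _ t => ?_⟩
  linarith [hwalk t, show 2 / (T.card : ℝ) = 2 * (1 / T.card) by ring]

/-- Let `T` be a twin set containing `u`, with common diagonal entry `ω` and common
off-diagonal entry `η`, and let `θ = ω - η`.  Let `E` be the matrix of the orthogonal
projection onto the eigenspace `ker(M - θI)` (characterized as the symmetric idempotent
matrix whose fixed points are exactly the `θ`-eigenvectors).  Then
`E_{u,u} ≥ 1 - 1/|T|`, and `|U(t)_{u,u}| ≥ 2 E_{u,u} - 1` for all `t`; in particular if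
`|T| ≥ 3` then `|U(t)_{u,u}| ≥ 1 - 2/|T|` for all `t`. -/
theorem twin_set_projection_bound {n : ℕ} (M : Matrix (Fin n) (Fin n) ℝ) (hM : M.IsSymm)
    (T : Finset (Fin n)) (ω η : ℝ) (u : Fin n) (huT : u ∈ T) (hT : 2 ≤ T.card)
    (htwin : ∀ x ∈ T, ∀ y ∈ T, x ≠ y → ∀ w ∉ T, M x w = M y w)
    (hdiag : ∀ x ∈ T, M x x = ω)
    (hoff : ∀ x ∈ T, ∀ y ∈ T, x ≠ y → M x y = η)
    (E : Matrix (Fin n) (Fin n) ℝ) (hE1 : E.IsSymm) (hE2 : E * E = E)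
    (hE3 : ∀ x : Fin n → ℝ, E.mulVec x = x ↔ M.mulVec x = (ω - η) • x) :
    1 - 1 / (T.card : ℝ) ≤ E u u ∧
    (∀ t : ℝ, 2 * E u u - 1 ≤ ‖qwU M t u u‖) ∧
    (3 ≤ T.card → ∀ t : ℝ, 1 - 2 / (T.card : ℝ) ≤ ‖qwU M t u u‖) :=
  twin_set_projection_bound_general M hM T ω η u huT htwin hdiag hoff E hE1 hE2 hE3
end

section
/- Let X = K_{n_1,…,n_k} be the complete multipartite graph on n = n_1 + … + n_k ≥ 3 vertices with k ≥ 2 parts, let L be its Laplacian matrix and U(t) = exp(itL). If n_ℓ = 1 for some ℓ and u is the unique vertex in that part, then |U(t)_{u,u}| ≥ 1 − 2/n for all t, with equality at t = jπ/n for every odd integer j; thus u is tightly (1 − 2/n)-sedentary. -/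
/-- The Laplacian matrix `L = D - A` of the complete multipartite graph
`K_{n 0, …, n (k-1)}`, whose vertices are pairs `⟨i, a⟩` with `i` a part and `a` a vertex
of that part; two vertices are adjacent iff they lie in different parts, and every vertex
has degree `(∑ i, n i) - n i`. -/
def cmLap {k : ℕ} (n : Fin k → ℕ) :
    Matrix ((i : Fin k) × Fin (n i)) ((i : Fin k) × Fin (n i)) ℝ :=
  Matrix.of fun u v =>
    (if u = v then (∑ i, (n i : ℝ)) - (n u.1 : ℝ) else 0) - (if u.1 = v.1 then 0 else 1)

/-! The vertex `u` of a singleton part is adjacent to every other vertex, so the Laplacian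
sends `e_u` to `N e_u - 𝟙` while it kills `𝟙` (`N` the number of vertices). Hence
`e_u = (e_u - 𝟙/N) + 𝟙/N` splits into eigenvectors for the eigenvalues `N` and `0`, and
`U(t)_{u,u} = 1/N + (1 - 1/N) e^{iNt}`. This point of a circle of radius `1 - 1/N` centred at
`1/N` has modulus at least `1 - 2/N`, attained when `e^{iNt} = -1`, i.e. at `t = jπ/N` with
`j` odd. -/

open Matrix

theorem Matrix.exp_mulVec_of_mulVec_eq_smul_s4 {𝕂 V : Type*} [RCLike 𝕂] [Fintype V]
    [DecidableEq V] {A : Matrix V V 𝕂} {v : V → 𝕂} {c : 𝕂} (h : A *ᵥ v = c • v) :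
    NormedSpace.exp A *ᵥ v = NormedSpace.exp c • v := by
  -- The exponential series needs a Banach algebra structure on matrices; any one will do.
  let _ := Matrix.linftyOpNormedRing (n := V) (α := 𝕂)
  let _ := Matrix.linftyOpNormedAlgebra (n := V) (R := 𝕂) (α := 𝕂)
  have : ProperSpace (Matrix V V 𝕂) := FiniteDimensional.proper_rclike 𝕂 _
  have hpow (m : ℕ) : A ^ m *ᵥ v = c ^ m • v := by
    induction m with
    | zero => simp
    | succ m ih => rw [pow_succ', ← mulVec_mulVec, ih, mulVec_smul, h, smul_smul, pow_succ]
  have hcont : Continuous (mulVec.addMonoidHomLeft v : Matrix V V 𝕂 →+ (V → 𝕂)) :=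
    continuous_id.matrix_mulVec continuous_const
  refine ((NormedSpace.exp_series_hasSum_exp' (𝕂 := 𝕂) A).map _ hcont).unique ?_
  convert (NormedSpace.exp_series_hasSum_exp' (𝕂 := 𝕂) c).smul_const v using 2 with m
  simp [mulVec.addMonoidHomLeft, smul_mulVec, hpow, smul_smul]

theorem qwU_apply_self_eq {V : Type*} [Fintype V] [DecidableEq V] {M : Matrix V V ℝ} {u : V}
    {N : ℝ} (hN : N ≠ 0) (hrow : ∀ i, ∑ j, M i j = 0)
    (hcol : ∀ i, M i u = (if i = u then N else 0) - 1) (t : ℝ) :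
    qwU M t u u = N⁻¹ + (1 - N⁻¹) * Complex.exp ((N * t : ℝ) * Complex.I) := by
  set Mc := M.map ((↑) : ℝ → ℂ)
  set e : V → ℂ := Pi.single u 1
  set w : V → ℂ := e - (N⁻¹ : ℂ) • 1
  have hM1 : Mc *ᵥ 1 = 0 := by
    ext i
    simp only [Mc, mulVec, dotProduct, map_apply, Pi.one_apply, mul_one, ← Complex.ofReal_sum,
      hrow, Complex.ofReal_zero, Pi.zero_apply]
  have hMw : Mc *ᵥ w = (N : ℂ) • w := by
    have hMe : Mc *ᵥ e = (N : ℂ) • e - 1 := by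
      ext i
      by_cases hi : i = u <;> simp [Mc, e, hcol, hi]
    rw [mulVec_sub, mulVec_smul, hMe, hM1, smul_zero, sub_zero, smul_sub, smul_smul,
      mul_inv_cancel₀ (Complex.ofReal_ne_zero.mpr hN), one_smul]
  set A := (Complex.I * t) • Mc
  have hA1 : A *ᵥ 1 = (0 : ℂ) • 1 := by rw [smul_mulVec, hM1, smul_zero, zero_smul]
  have hAw : A *ᵥ w = ((N * t : ℝ) * Complex.I) • w := by
    rw [smul_mulVec, hMw, smul_smul]
    push_cast
    ring_nf
  have hexp : NormedSpace.exp A *ᵥ e =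
      Complex.exp ((N * t : ℝ) * Complex.I) • w + (N⁻¹ : ℂ) • 1 := by
    have he : e = w + (N⁻¹ : ℂ) • 1 := by simp [w]
    rw [he, mulVec_add, mulVec_smul, exp_mulVec_of_mulVec_eq_smul_s4 hAw,
      exp_mulVec_of_mulVec_eq_smul_s4 hA1, NormedSpace.exp_zero, one_smul, Complex.exp_eq_exp_ℂ]
  calc qwU M t u u = (NormedSpace.exp A *ᵥ e) u := by rw [mulVec_single_one]; rfl
    _ = _ := by
      rw [hexp]
      simp only [Complex.ofReal_mul, Pi.add_apply, Pi.smul_apply, Pi.sub_apply,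
        Pi.single_eq_same, Pi.one_apply, smul_eq_mul, mul_one, Complex.ofReal_inv, w, e]
      ring

theorem one_sub_two_mul_le_norm_add_one_sub_mul {z : ℂ} (hz : ‖z‖ = 1) {r : ℝ}
    (hr : 0 ≤ r) :
    1 - 2 * r ≤ ‖r + (1 - r) * z‖ := by
  have h := norm_sub_norm_le ((1 - r : ℝ) * z : ℂ) (-(r : ℂ))
  rw [sub_neg_eq_add, add_comm, norm_neg, norm_mul, hz, Complex.norm_real, Complex.norm_real] at h
  push_cast at h
  rw [Real.norm_eq_abs, Real.norm_eq_abs, abs_of_nonneg hr] at h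
  linarith [le_abs_self (1 - r)]

theorem Complex.exp_int_mul_pi_mul_I_of_odd {j : ℤ} (hj : Odd j) :
    Complex.exp ((j * Real.pi : ℝ) * I) = -1 := by
  rw [Complex.exp_mul_I, ← Complex.ofReal_cos, ← Complex.ofReal_sin, Real.cos_int_mul_pi,
    Real.sin_int_mul_pi, hj.neg_one_zpow]
  simp

theorem Fintype.sum_sigma_comp_fst {ι M : Type*} [Fintype ι] [AddCommMonoid M]
    {β : ι → Type*} [∀ i, Fintype (β i)] (g : ι → M) :
    ∑ v : Sigma β, g v.1 = ∑ i, Fintype.card (β i) • g i := by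
  simp [Fintype.sum_sigma]

section CompleteMultipartite

variable {k : ℕ} (n : Fin k → ℕ)

theorem cmLap_row_sum (w : (i : Fin k) × Fin (n i)) : ∑ v, cmLap n w v = 0 := by
  have hdeg : ∑ v : (i : Fin k) × Fin (n i), (if w.1 = v.1 then 0 else 1 : ℝ) =
      ∑ i, (n i : ℝ) - n w.1 := by
    rw [Fintype.sum_sigma_comp_fst fun i => if w.1 = i then (0 : ℝ) else 1]
    simp [smul_ite, Finset.sum_ite, Finset.filter_ne, Finset.sum_erase_eq_sub]
  simp only [cmLap, of_apply, Finset.sum_sub_distrib, Finset.sum_ite_eq, Finset.mem_univ,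
    if_true, hdeg, sub_self]

theorem cmLap_apply_of_card_eq_one {u : (i : Fin k) × Fin (n i)} (hu : n u.1 = 1)
    (w : (i : Fin k) × Fin (n i)) :
    cmLap n w u = (if w = u then ((∑ i, n i : ℕ) : ℝ) else 0) - 1 := by
  have hpart (hw : w.1 = u.1) : w = u := by
    refine Sigma.ext hw ((Fin.heq_ext_iff (congrArg n hw)).mpr ?_)
    have := w.2.isLt
    have := u.2.isLt
    have : n w.1 = 1 := hw ▸ hu
    omega
  by_cases hw : w = u
  · subst hw
    simp [cmLap, hu]
  · simp [cmLap, hw, mt hpart hw]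

end CompleteMultipartite

theorem cmg_part_one_tightly_sedentary_general {k : ℕ} (n : Fin k → ℕ)
    (hN : 3 ≤ ∑ i, n i)
    (ℓ : Fin k) (hℓ : n ℓ = 1)
    (u : (i : Fin k) × Fin (n i)) (hu : u.1 = ℓ) :
    (∀ t : ℝ, 1 - 2 / ((∑ i, n i : ℕ) : ℝ) ≤ ‖qwU (cmLap n) t u u‖) ∧
    (∀ j : ℤ, Odd j →
      ‖qwU (cmLap n) ((j : ℝ) * Real.pi / ((∑ i, n i : ℕ) : ℝ)) u u‖
        = 1 - 2 / ((∑ i, n i : ℕ) : ℝ)) := by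
  set N : ℝ := ((∑ i, n i : ℕ) : ℝ)
  have hN2 : 2 ≤ N := Nat.ofNat_le_cast.mpr (by omega)
  have hUu (t : ℝ) :
      qwU (cmLap n) t u u = N⁻¹ + (1 - N⁻¹) * Complex.exp ((N * t : ℝ) * Complex.I) :=
    qwU_apply_self_eq (by positivity) (cmLap_row_sum n)
      (cmLap_apply_of_card_eq_one n (hu ▸ hℓ)) t
  rw [div_eq_mul_inv]
  refine ⟨fun t => ?_, fun j hj => ?_⟩
  · rw [hUu]
    exact one_sub_two_mul_le_norm_add_one_sub_mul (Complex.norm_exp_ofReal_mul_I _) (by positivity)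
  · have hinv : 2 * N⁻¹ ≤ 1 := by
      rw [← div_eq_mul_inv, div_le_one (by positivity)]
      exact hN2
    rw [hUu, mul_div_cancel₀ _ (by positivity : N ≠ 0), Complex.exp_int_mul_pi_mul_I_of_odd hj]
    calc ‖((N⁻¹ : ℝ) : ℂ) + (1 - N⁻¹) * -1‖
        = ‖((1 - 2 * N⁻¹ : ℝ) : ℂ)‖ := by
          rw [← norm_neg]
          push_cast
          ring_nf
      _ = 1 - 2 * N⁻¹ := by rw [Complex.norm_real, Real.norm_of_nonneg (by linarith)]

/-- In the complete multipartite graph `K_{n_1,…,n_k}` on `n ≥ 3` vertices with `k ≥ 2`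
parts, a vertex `u` lying in a part of size `1` satisfies `|U(t)_{u,u}| ≥ 1 - 2/n` for
all `t`, with equality at `t = jπ/n` for every odd integer `j`; i.e. `u` is tightly
`(1 - 2/n)`-sedentary with respect to the Laplacian. -/
theorem cmg_part_one_tightly_sedentary {k : ℕ} (n : Fin k → ℕ)
    (hk : 2 ≤ k) (hpos : ∀ i, 0 < n i) (hN : 3 ≤ ∑ i, n i)
    (ℓ : Fin k) (hℓ : n ℓ = 1)
    (u : (i : Fin k) × Fin (n i)) (hu : u.1 = ℓ) :
    (∀ t : ℝ, 1 - 2 / ((∑ i, n i : ℕ) : ℝ) ≤ ‖qwU (cmLap n) t u u‖) ∧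
    (∀ j : ℤ, Odd j →
      ‖qwU (cmLap n) ((j : ℝ) * Real.pi / ((∑ i, n i : ℕ) : ℝ)) u u‖
        = 1 - 2 / ((∑ i, n i : ℕ) : ℝ)) :=
  cmg_part_one_tightly_sedentary_general n hN ℓ hℓ u hu
end

section
/- Let X = K_{n_1,…,n_k} be the complete multipartite graph, let A be its adjacency matrix and U(t) = exp(itA). If n_ℓ ≥ 3 for some ℓ, then every vertex u in the part of size n_ℓ satisfies |U(t)_{u,u}| ≥ 1 − 2/n_ℓ for all t. -/
/-- The 0-1 adjacency matrix of the complete multipartite graph `K_{n 0, …, n (k-1)}`: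
two vertices are adjacent iff they lie in different parts. -/
def cmAdj {k : ℕ} (n : Fin k → ℕ) :
    Matrix ((i : Fin k) × Fin (n i)) ((i : Fin k) × Fin (n i)) ℝ :=
  Matrix.of fun u v => if u.1 = v.1 then 0 else 1

open Matrix NormedSpace

namespace Matrix

variable {m : Type*} [Fintype m]

theorem dotProduct_mulVec_add_of_mulVec_eq_self {R : Type*} [CommSemiring R]
    {U : Matrix m m R} (hU : U.IsSymm) {w x : m → R} (hw : U *ᵥ w = w) (hxw : x ⬝ᵥ w = 0) :
    (w + x) ⬝ᵥ (U *ᵥ (w + x)) = w ⬝ᵥ w + x ⬝ᵥ (U *ᵥ x) := by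
  have hwx : w ⬝ᵥ (U *ᵥ x) = 0 := by
    rw [dotProduct_mulVec, ← mulVec_transpose, hU, hw, dotProduct_comm, hxw]
  rw [mulVec_add, hw, add_dotProduct, dotProduct_add, dotProduct_add, hwx, hxw]
  ring

variable [DecidableEq m]

theorem star_dotProduct_mulVec_self_of_mem_unitaryGroup {R : Type*} [CommRing R] [StarRing R]
    {U : Matrix m m R} (hU : U ∈ unitaryGroup m R) (x : m → R) :
    star (U *ᵥ x) ⬝ᵥ (U *ᵥ x) = star x ⬝ᵥ x := by
  rw [star_mulVec, dotProduct_mulVec, vecMul_vecMul, ← star_eq_conjTranspose,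
    (mem_unitaryGroup_iff').mp hU, vecMul_one]

variable {𝕂 : Type*} [RCLike 𝕂]

/-- Cauchy–Schwarz in `EuclideanSpace 𝕂 m`, where `U` acts isometrically. -/
theorem norm_star_dotProduct_mulVec_le_of_mem_unitaryGroup
    {U : Matrix m m 𝕂} (hU : U ∈ unitaryGroup m 𝕂) (x : m → 𝕂) :
    ‖star x ⬝ᵥ (U *ᵥ x)‖ ≤ ‖star x ⬝ᵥ x‖ := by
  have hinner (y z : m → 𝕂) : inner 𝕂 (WithLp.toLp 2 y) (WithLp.toLp 2 z) = star y ⬝ᵥ z := by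
    rw [EuclideanSpace.inner_toLp_toLp, dotProduct_comm]
  have hnorm : ‖WithLp.toLp 2 (U *ᵥ x)‖ = ‖WithLp.toLp 2 x‖ := by
    rw [norm_eq_sqrt_re_inner (𝕜 := 𝕂), norm_eq_sqrt_re_inner (𝕜 := 𝕂), hinner, hinner,
      star_dotProduct_mulVec_self_of_mem_unitaryGroup hU]
  calc ‖star x ⬝ᵥ (U *ᵥ x)‖ = ‖inner 𝕂 (WithLp.toLp 2 x) (WithLp.toLp 2 (U *ᵥ x))‖ := by
        rw [hinner]
    _ ≤ ‖WithLp.toLp 2 x‖ * ‖WithLp.toLp 2 (U *ᵥ x)‖ := norm_inner_le_norm _ _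
    _ = ‖star x ⬝ᵥ x‖ := by
        rw [hnorm, ← hinner, inner_self_eq_norm_sq_to_K, norm_pow, RCLike.norm_ofReal,
          abs_norm, sq]

theorem exp_mem_unitaryGroup_of_conjTranspose_eq_neg {A : Matrix m m 𝕂} (h : Aᴴ = -A) :
    exp A ∈ unitaryGroup m 𝕂 := by
  rw [mem_unitaryGroup_iff', star_eq_conjTranspose, ← exp_conjTranspose, h,
    ← exp_add_of_commute _ _ (Commute.refl A).neg_left, neg_add_cancel, exp_zero]

theorem exp_mulVec_eq_self_of_mulVec_eq_zero {A : Matrix m m 𝕂} {v : m → 𝕂} (h : A *ᵥ v = 0) :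
    exp A *ᵥ v = v := by
  have hA : SemiconjBy (replicateCol m v) 0 A := by
    ext i j
    simpa [SemiconjBy, mul_apply, replicateCol_apply, mulVec, dotProduct] using
      (congrFun h i).symm
  have hexp : replicateCol m v = exp A * replicateCol m v := by
    -- any Banach algebra norm will do; `exp` itself only depends on the topology
    let _ : NormedRing (Matrix m m 𝕂) := Matrix.linftyOpNormedRing
    let _ : NormedAlgebra 𝕂 (Matrix m m 𝕂) := Matrix.linftyOpNormedAlgebra
    have h := @SemiconjBy.exp_right _ _ (NormedAlgebra.restrictScalars ℚ 𝕂 _)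
      (FiniteDimensional.complete 𝕂 _) _ _ _ hA
    rwa [SemiconjBy, exp_zero, mul_one] at h
  ext i
  simpa [mul_apply, replicateCol_apply, mulVec, dotProduct] using
    (congrFun (congrFun hexp i) i).symm

end Matrix

section QuantumWalk

variable {V : Type*} [Fintype V] [DecidableEq V] {M : Matrix V V ℝ}

theorem qwU_mem_unitaryGroup (hM : M.IsSymm) (t : ℝ) : qwU M t ∈ unitaryGroup V ℂ := by
  refine exp_mem_unitaryGroup_of_conjTranspose_eq_neg ?_
  have hMc : (M.map (↑· : ℝ → ℂ))ᴴ = M.map (↑· : ℝ → ℂ) := by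
    rw [← conjTranspose_map _ (fun _ => by simp), conjTranspose_eq_transpose_of_trivial, hM]
  rw [conjTranspose_smul, hMc, ← neg_smul]
  congr 1
  simp [Complex.conj_I]

theorem qwU_isSymm (hM : M.IsSymm) (t : ℝ) : (qwU M t).IsSymm := by
  rw [qwU, IsSymm, ← exp_transpose, transpose_smul, ← transpose_map, hM]

theorem qwU_mulVec_eq_self {w : V → ℂ} (hw : M.map (↑· : ℝ → ℂ) *ᵥ w = 0) (t : ℝ) :
    qwU M t *ᵥ w = w :=
  exp_mulVec_eq_self_of_mulVec_eq_zero (by rw [smul_mulVec, hw, smul_zero])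

end QuantumWalk

section CompleteMultipartite

variable {k : ℕ} (n : Fin k → ℕ)

def partIndicator (ℓ : Fin k) : ((i : Fin k) × Fin (n i)) → ℂ :=
  fun v => if v.1 = ℓ then 1 else 0

variable {n}

theorem star_partIndicator (ℓ : Fin k) : star (partIndicator n ℓ) = partIndicator n ℓ := by
  funext v
  by_cases h : v.1 = ℓ <;> simp [partIndicator, h]

theorem partIndicator_dotProduct (ℓ : Fin k) (f : ((i : Fin k) × Fin (n i)) → ℂ) :
    partIndicator n ℓ ⬝ᵥ f = ∑ j, f ⟨ℓ, j⟩ := by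
  rw [dotProduct, Fintype.sum_sigma, Finset.sum_eq_single ℓ]
  · simp [partIndicator]
  · intro i _ hi
    simp [partIndicator, hi]
  · simp

theorem partIndicator_dotProduct_self (ℓ : Fin k) :
    partIndicator n ℓ ⬝ᵥ partIndicator n ℓ = n ℓ := by
  simp [partIndicator_dotProduct, partIndicator]

theorem cmAdj_isSymm : (cmAdj n).IsSymm := by
  ext v x
  simp [cmAdj, eq_comm]

/-- The columns of the adjacency matrix within one part coincide. -/
theorem cmAdj_mulVec_partIndicator (u : (i : Fin k) × Fin (n i)) :
    (cmAdj n).map (↑· : ℝ → ℂ) *ᵥ partIndicator n u.1 =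
      (n u.1 : ℂ) • ((cmAdj n).map (↑· : ℝ → ℂ)).col u := by
  funext v
  have hcol (j : Fin (n u.1)) :
      (cmAdj n).map (↑· : ℝ → ℂ) v ⟨u.1, j⟩ = (cmAdj n).map (↑· : ℝ → ℂ) v u := by
    simp [cmAdj]
  rw [mulVec, dotProduct_comm, partIndicator_dotProduct, Finset.sum_congr rfl fun j _ => hcol j,
    Finset.sum_const, Finset.card_univ, Fintype.card_fin, nsmul_eq_mul]
  rfl

theorem cmAdj_mulVec_single_sub_partIndicator (u : (i : Fin k) × Fin (n i)) :
    (cmAdj n).map (↑· : ℝ → ℂ) *ᵥ (Pi.single u 1 - (n u.1 : ℂ)⁻¹ • partIndicator n u.1) = 0 := by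
  have hN : (n u.1 : ℂ) ≠ 0 := Nat.cast_ne_zero.mpr u.2.pos.ne'
  rw [mulVec_sub, mulVec_smul, cmAdj_mulVec_partIndicator, mulVec_single_one, inv_smul_smul₀ hN,
    sub_self]

theorem qwU_cmAdj_apply_self (u : (i : Fin k) × Fin (n i)) (t : ℝ) :
    qwU (cmAdj n) t u u = (1 - (n u.1 : ℂ)⁻¹) +
      (n u.1 : ℂ)⁻¹ ^ 2 * (partIndicator n u.1 ⬝ᵥ (qwU (cmAdj n) t *ᵥ partIndicator n u.1)) := by
  set U := qwU (cmAdj n) t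
  set χ := partIndicator n u.1
  set c := (n u.1 : ℂ)⁻¹
  set w := Pi.single u 1 - c • χ
  have hN : (n u.1 : ℂ) ≠ 0 := Nat.cast_ne_zero.mpr u.2.pos.ne'
  have hχχ : χ ⬝ᵥ χ = n u.1 := partIndicator_dotProduct_self u.1
  have hχu : χ u = 1 := by simp [χ, partIndicator]
  have hχw : χ ⬝ᵥ w = 0 := by
    rw [dotProduct_sub, dotProduct_smul, dotProduct_single_one, hχu, hχχ, smul_eq_mul,
      inv_mul_cancel₀ hN, sub_self]
  have hww : w ⬝ᵥ w = 1 - c := by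
    rw [dotProduct_sub, dotProduct_smul, dotProduct_comm w χ, hχw, smul_zero, sub_zero,
      dotProduct_single_one]
    simp [w, hχu]
  have hUw : U *ᵥ w = w := qwU_mulVec_eq_self (cmAdj_mulVec_single_sub_partIndicator u) t
  calc U u u = Pi.single u 1 ⬝ᵥ (U *ᵥ Pi.single u 1) := by
        rw [mulVec_single_one, single_one_dotProduct, col_apply]
    _ = (w + c • χ) ⬝ᵥ (U *ᵥ (w + c • χ)) := by rw [sub_add_cancel]
    _ = w ⬝ᵥ w + (c • χ) ⬝ᵥ (U *ᵥ (c • χ)) :=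
        dotProduct_mulVec_add_of_mulVec_eq_self (qwU_isSymm cmAdj_isSymm t) hUw
          (by rw [smul_dotProduct, hχw, smul_zero])
    _ = (1 - c) + c ^ 2 * (χ ⬝ᵥ (U *ᵥ χ)) := by
        rw [hww, mulVec_smul, smul_dotProduct, dotProduct_smul, smul_eq_mul, smul_eq_mul]
        ring

end CompleteMultipartite

theorem one_sub_two_div_le_norm {N : ℕ} (hN : N ≠ 0) {z : ℂ} (hz : ‖z‖ ≤ N) :
    1 - 2 / (N : ℝ) ≤ ‖(1 - (N : ℂ)⁻¹) + (N : ℂ)⁻¹ ^ 2 * z‖ := by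
  have hN1 : (1 : ℝ) ≤ N := Nat.one_le_cast.mpr (Nat.one_le_iff_ne_zero.mpr hN)
  have hfirst : ‖1 - (N : ℂ)⁻¹‖ = 1 - 1 / N := by
    have h : 1 - (N : ℂ)⁻¹ = ((1 - 1 / N : ℝ) : ℂ) := by push_cast; ring
    rw [h, Complex.norm_real,
      Real.norm_of_nonneg (sub_nonneg.mpr ((div_le_one (by linarith)).mpr hN1))]
  have hsecond : ‖(N : ℂ)⁻¹ ^ 2 * z‖ ≤ 1 / N := by
    rw [norm_mul, norm_pow, norm_inv, Complex.norm_natCast]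
    calc (N : ℝ)⁻¹ ^ 2 * ‖z‖ ≤ (N : ℝ)⁻¹ ^ 2 * N := by gcongr
      _ = 1 / (N : ℝ) := by field_simp
  have := norm_sub_le_norm_add (1 - (N : ℂ)⁻¹) ((N : ℂ)⁻¹ ^ 2 * z)
  linarith [show 2 / (N : ℝ) = 1 / N + 1 / N by ring]

theorem cmg_adjacency_big_part_sedentary_general {k : ℕ} (n : Fin k → ℕ)
    (ℓ : Fin k)
    (u : (i : Fin k) × Fin (n i)) (hu : u.1 = ℓ) :
    ∀ t : ℝ, 1 - 2 / (n ℓ : ℝ) ≤ ‖qwU (cmAdj n) t u u‖ := by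
  intro t
  subst hu
  rw [qwU_cmAdj_apply_self]
  refine one_sub_two_div_le_norm u.2.pos.ne' ?_
  calc ‖partIndicator n u.1 ⬝ᵥ (qwU (cmAdj n) t *ᵥ partIndicator n u.1)‖
      = ‖star (partIndicator n u.1) ⬝ᵥ (qwU (cmAdj n) t *ᵥ partIndicator n u.1)‖ := by
        rw [star_partIndicator]
    _ ≤ ‖star (partIndicator n u.1) ⬝ᵥ partIndicator n u.1‖ :=
        norm_star_dotProduct_mulVec_le_of_mem_unitaryGroup (qwU_mem_unitaryGroup cmAdj_isSymm t) _
    _ = n u.1 := by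
        rw [star_partIndicator, partIndicator_dotProduct_self, Complex.norm_natCast]

/-- In the complete multipartite graph `K_{n_1,…,n_k}`, every vertex `u` in a part of
size `n_ℓ ≥ 3` satisfies `|U(t)_{u,u}| ≥ 1 - 2/n_ℓ` for all `t`, with respect to the
adjacency matrix. -/
theorem cmg_adjacency_big_part_sedentary {k : ℕ} (n : Fin k → ℕ) (hpos : ∀ i, 0 < n i)
    (ℓ : Fin k) (hℓ : 3 ≤ n ℓ)
    (u : (i : Fin k) × Fin (n i)) (hu : u.1 = ℓ) :
    ∀ t : ℝ, 1 - 2 / (n ℓ : ℝ) ≤ ‖qwU (cmAdj n) t u u‖ :=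
  cmg_adjacency_big_part_sedentary_general n ℓ u hu
end

section
/- Let m ≥ 3 be an integer, let Y be a graph with real symmetric adjacency matrix A(Y), and let v be a vertex of Y such that |U_{A(Y)}(t)_{v,v}| ≥ C for all t, where C > 1/(m−1). Let B = A(K_m) ⊗ A(Y) be the adjacency matrix of the direct product K_m × Y (Kronecker product of the adjacency matrix of the complete graph K_m with A(Y)). Then for every vertex u of K_m and all t, |U_B(t)_{(u,v),(u,v)}| ≥ C − (C+1)/m; in particular (u,v) is (C − (C+1)/m)-sedentary in K_m × Y. -/
open Kronecker

/-- The adjacency matrix `J_m - I_m` of the complete graph `K_m`. -/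
def completeAdj (m : ℕ) : Matrix (Fin m) (Fin m) ℝ :=
  Matrix.of fun i j => if i = j then 0 else 1

/-! With `P = J/m`, the adjacency matrix of `K_m` is `(m - 1) P - (1 - P)`, where `P` and `1 - P`
are complementary idempotents. Hence `exp(it A(K_m) ⊗ A) = P ⊗ U_A((m - 1)t) + (1 - P) ⊗ U_A(-t)`,
whose `((u, v), (u, v))` entry is `(1 - 1/m) U_A(-t)_{vv} + (1/m) U_A((m - 1)t)_{vv}`. The first
term has modulus at least `(1 - 1/m) C` by sedentariness of `v`, the second at most `1/m` since
`U_A((m - 1)t)` is unitary. -/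

open NormedSpace Matrix

theorem NormedSpace.exp_mul_add_one_sub_mul {𝔸 : Type*} [NormedRing 𝔸] [NormedAlgebra ℚ 𝔸]
    [CompleteSpace 𝔸] {e x y : 𝔸} (he : IsIdempotentElem e) (hx : Commute e x)
    (hy : Commute e y) :
    exp (e * x + (1 - e) * y) = e * exp x + (1 - e) * exp y := by
  have hxe : SemiconjBy e x (e * x + (1 - e) * y) := by
    rw [SemiconjBy, add_mul, mul_assoc, mul_assoc, ← hx.eq, ← hy.eq, ← mul_assoc, he.eq,
      ← mul_assoc, he.one_sub_mul_self, zero_mul, add_zero]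
  have hye : SemiconjBy (1 - e) y (e * x + (1 - e) * y) := by
    have hx' : Commute (1 - e) x := (Commute.one_left x).sub_left hx
    have hy' : Commute (1 - e) y := (Commute.one_left y).sub_left hy
    rw [SemiconjBy, add_mul, mul_assoc, mul_assoc, ← hx'.eq, ← hy'.eq, ← mul_assoc,
      he.mul_one_sub_self, zero_mul, zero_add, ← mul_assoc, he.one_sub.eq]
  calc exp (e * x + (1 - e) * y)
      = exp (e * x + (1 - e) * y) * e + exp (e * x + (1 - e) * y) * (1 - e) := by
        rw [← mul_add, add_sub_cancel, mul_one]
    _ = e * exp x + (1 - e) * exp y := by rw [← hxe.exp_right.eq, ← hye.exp_right.eq]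

namespace Matrix

theorem sub_kronecker {l m n p α : Type*} [NonUnitalNonAssocRing α] (A₁ A₂ : Matrix l m α)
    (B : Matrix n p α) : (A₁ - A₂) ⊗ₖ B = A₁ ⊗ₖ B - A₂ ⊗ₖ B := by
  ext
  simp [sub_mul]

variable {l n : Type*} [Fintype l] [DecidableEq l] [Fintype n] [DecidableEq n]

def oneKroneckerRingHom (l : Type*) [Fintype l] [DecidableEq l] (α : Type*) [CommSemiring α] :
    Matrix n n α →+* Matrix (l × n) (l × n) α where
  toFun X := 1 ⊗ₖ X
  map_one' := one_kronecker_one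
  map_mul' X Y := by rw [← mul_kronecker_mul, one_mul]
  map_zero' := kronecker_zero _
  map_add' := kronecker_add _

section Exponential

-- `exp` on matrices does not depend on a norm; one is chosen only to apply Banach-algebra lemmas.
attribute [local instance] Matrix.linftyOpNormedRing Matrix.linftyOpNormedAlgebra

theorem exp_one_kronecker (X : Matrix n n ℂ) : exp ((1 : Matrix l l ℂ) ⊗ₖ X) = 1 ⊗ₖ exp X :=
  (map_exp (oneKroneckerRingHom l ℂ)
    (continuous_matrix fun _ _ => continuous_const.mul (continuous_id.matrix_elem _ _)) X).symm

theorem exp_kronecker_add_one_sub_kronecker {P : Matrix l l ℂ} (hP : IsIdempotentElem P)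
    (X Y : Matrix n n ℂ) :
    exp (P ⊗ₖ X + (1 - P) ⊗ₖ Y) = P ⊗ₖ exp X + (1 - P) ⊗ₖ exp Y := by
  have hfactor (R : Matrix l l ℂ) (Z : Matrix n n ℂ) : R ⊗ₖ Z = R ⊗ₖ 1 * 1 ⊗ₖ Z := by
    rw [← mul_kronecker_mul, mul_one, one_mul]
  have hE : IsIdempotentElem (P ⊗ₖ (1 : Matrix n n ℂ)) := by
    rw [IsIdempotentElem, ← mul_kronecker_mul, hP.eq, one_mul]
  have hcomm (Z : Matrix n n ℂ) : Commute (P ⊗ₖ 1) (1 ⊗ₖ Z) := by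
    rw [Commute, SemiconjBy, ← mul_kronecker_mul, ← mul_kronecker_mul, mul_one, one_mul,
      one_mul, mul_one]
  have hcompl : (1 - P) ⊗ₖ (1 : Matrix n n ℂ) = 1 - P ⊗ₖ 1 := by
    rw [sub_kronecker, one_kronecker_one]
  rw [hfactor P X, hfactor (1 - P) Y, hfactor P (exp X), hfactor (1 - P) (exp Y), hcompl,
    ← exp_one_kronecker, ← exp_one_kronecker]
  exact exp_mul_add_one_sub_mul hE (hcomm X) (hcomm Y)

end Exponential

end Matrix

noncomputable def averagingMatrix (m : ℕ) : Matrix (Fin m) (Fin m) ℂ :=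
  (m : ℂ)⁻¹ • of fun _ _ => 1

theorem isIdempotentElem_averagingMatrix {m : ℕ} (hm : m ≠ 0) :
    IsIdempotentElem (averagingMatrix m) := by
  ext i j
  simp only [averagingMatrix, smul_of, mul_apply, of_apply, Pi.smul_apply, smul_eq_mul, mul_one,
    Finset.sum_const, Finset.card_univ, Fintype.card_fin, nsmul_eq_mul, Matrix.smul_apply]
  field_simp

theorem completeAdj_map_ofReal {m : ℕ} (hm : m ≠ 0) :
    (completeAdj m).map ((↑) : ℝ → ℂ) =
      (↑((m : ℝ) - 1) : ℂ) • averagingMatrix m + (↑(-1 : ℝ) : ℂ) • (1 - averagingMatrix m) := by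
  have hJ : (completeAdj m).map ((↑) : ℝ → ℂ) = of (fun _ _ => 1) - 1 := by
    ext i j
    by_cases h : i = j <;> simp [completeAdj, h]
  have hm' : (m : ℂ) ≠ 0 := Nat.cast_ne_zero.2 hm
  rw [hJ, averagingMatrix]
  match_scalars
  · field_simp
    ring
  · ring

section QuantumWalk

variable {l V : Type*} [Fintype l] [DecidableEq l] [Fintype V] [DecidableEq V]

theorem qwU_kronecker_of_map_eq {K : Matrix l l ℝ} {P : Matrix l l ℂ} (hP : IsIdempotentElem P)
    {a b : ℝ} (hK : K.map ((↑) : ℝ → ℂ) = (a : ℂ) • P + (b : ℂ) • (1 - P))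
    (A : Matrix V V ℝ) (t : ℝ) :
    qwU (K ⊗ₖ A) t = P ⊗ₖ qwU A (a * t) + (1 - P) ⊗ₖ qwU A (b * t) := by
  have hmap : (K ⊗ₖ A).map (↑· : ℝ → ℂ) = K.map (↑) ⊗ₖ A.map (↑· : ℝ → ℂ) := by
    ext
    simp
  rw [qwU, qwU, qwU, ← exp_kronecker_add_one_sub_kronecker hP, hmap, hK, add_kronecker,
    smul_kronecker, smul_kronecker, smul_add, smul_smul, smul_smul, kronecker_smul,
    kronecker_smul]
  congr 1
  match_scalars <;> ring

theorem qwU_mem_unitaryGroup_s13 {A : Matrix V V ℝ} (hA : A.IsSymm) (t : ℝ) :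
    qwU A t ∈ unitaryGroup V ℂ := by
  set X := (Complex.I * t) • A.map ((↑) : ℝ → ℂ)
  have hX : Xᴴ = -X := by
    ext i j
    simp [X, hA.apply i j]
  rw [mem_unitaryGroup_iff, qwU, star_eq_conjTranspose, ← exp_conjTranspose, hX,
    ← Matrix.exp_add_of_commute _ _ (Commute.refl X).neg_right, add_neg_cancel, exp_zero]

theorem qwU_completeAdj_kronecker_apply_self {m : ℕ} (A : Matrix V V ℝ) (t : ℝ) (u : Fin m)
    (v : V) :
    qwU (completeAdj m ⊗ₖ A) t (u, v) (u, v) =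
      (↑(1 - (m : ℝ)⁻¹) : ℂ) * qwU A (-t) v v + (↑((m : ℝ)⁻¹) : ℂ) * qwU A ((m - 1) * t) v v := by
  have hm : m ≠ 0 := u.pos.ne'
  rw [qwU_kronecker_of_map_eq (isIdempotentElem_averagingMatrix hm) (completeAdj_map_ofReal hm)]
  simp only [averagingMatrix, smul_of, Matrix.add_apply, kroneckerMap_apply, of_apply,
    Pi.smul_apply, smul_eq_mul, mul_one, Matrix.sub_apply, one_apply_eq]
  push_cast
  rw [neg_one_mul]
  ring

end QuantumWalk

theorem direct_product_complete_sedentary_general {m : ℕ}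
    {V : Type*} [Fintype V] [DecidableEq V] (A : Matrix V V ℝ) (hA : A.IsSymm)
    (v : V) (C : ℝ)
    (hsed : ∀ t : ℝ, C ≤ ‖qwU A t v v‖) :
    ∀ (u : Fin m) (t : ℝ),
      C - (C + 1) / (m : ℝ) ≤ ‖qwU (completeAdj m ⊗ₖ A) t (u, v) (u, v)‖ := by
  intro u t
  have hm : (1 : ℝ) ≤ m := by exact_mod_cast u.pos
  have hw : 0 ≤ 1 - (m : ℝ)⁻¹ := sub_nonneg.2 (inv_le_one_of_one_le₀ hm)
  rw [qwU_completeAdj_kronecker_apply_self]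
  calc C - (C + 1) / m = (1 - (m : ℝ)⁻¹) * C - (m : ℝ)⁻¹ * 1 := by field_simp; ring
    _ ≤ (1 - (m : ℝ)⁻¹) * ‖qwU A (-t) v v‖ - (m : ℝ)⁻¹ * ‖qwU A ((m - 1) * t) v v‖ := by
      gcongr
      · exact hsed (-t)
      · exact entry_norm_bound_of_unitary (qwU_mem_unitaryGroup_s13 hA _) v v
    _ = _ := by
      rw [norm_mul, norm_mul, Complex.norm_real, Complex.norm_real, Real.norm_of_nonneg hw,
        Real.norm_of_nonneg (by positivity)]
    _ ≤ _ := norm_sub_le_norm_add _ _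

/-- If `m ≥ 3` and the vertex `v` of `Y` is `C`-sedentary with `C > 1/(m-1)`, then every
vertex `(u, v)` of the direct product `K_m × Y` (adjacency matrix the Kronecker product
`A(K_m) ⊗ A(Y)`) is `(C - (C+1)/m)`-sedentary. -/
theorem direct_product_complete_sedentary {m : ℕ} (hm : 3 ≤ m)
    {V : Type*} [Fintype V] [DecidableEq V] (A : Matrix V V ℝ) (hA : A.IsSymm)
    (v : V) (C : ℝ) (hC : 1 / ((m : ℝ) - 1) < C)
    (hsed : ∀ t : ℝ, C ≤ ‖qwU A t v v‖) :
    ∀ (u : Fin m) (t : ℝ),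
      C - (C + 1) / (m : ℝ) ≤ ‖qwU (completeAdj m ⊗ₖ A) t (u, v) (u, v)‖ :=
  direct_product_complete_sedentary_general A hA v C hsed
end

section
/- Let Y be a graph with real symmetric adjacency matrix A(Y) and let B = A(K_2) ⊗ A(Y) be the adjacency matrix of the bipartite double K_2 × Y. Then for every vertex u of K_2, every vertex v of Y, and all real t, |U_B(t)_{(u,v),(u,v)}| = |Re(U_{A(Y)}(t)_{v,v})|. Consequently, K_2 × Y is C-sedentary at (u,v) if and only if |Re(U_{A(Y)}(t)_{v,v})| ≥ C for all t > 0. -/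
open Kronecker

/-!
`P = A(K₂)` is an involution with zero diagonal. For the idempotent `e = (1 + P) / 2`, the map
`(X, Y) ↦ e ⊗ X + (1 - e) ⊗ Y` is a continuous ring homomorphism out of a product of matrix
algebras, and `P ⊗ M` is the image of `(M, -M)`; hence
`exp (P ⊗ M) = e ⊗ exp M + (1 - e) ⊗ exp (-M)`. Both `e` and `1 - e` have diagonal entries
`1/2`, so for `M = itA` the diagonal entry at `(u, v)` is the average of `U_A(t)_{vv}` and
`U_A(-t)_{vv}`. Since `A` is real, `U_A(-t)` is the entrywise conjugate of `U_A(t)`, and the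
average is the real part.
-/

open NormedSpace

namespace Matrix

variable {m n : Type*} [Fintype m] [DecidableEq m] [Fintype n] [DecidableEq n]

def kroneckerIdempotentRingHom {R : Type*} [CommRing R] (e : Matrix m m R)
    (he : IsIdempotentElem e) : Matrix n n R × Matrix n n R →+* Matrix (m × n) (m × n) R where
  toFun x := e ⊗ₖ x.1 + (1 - e) ⊗ₖ x.2
  map_one' := by
    rw [Prod.fst_one, Prod.snd_one, ← add_kronecker, add_sub_cancel, one_kronecker_one]
  map_mul' x y := by
    simp only [Prod.fst_mul, Prod.snd_mul, add_mul, mul_add, ← mul_kronecker_mul, he.eq,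
      he.one_sub.eq, he.mul_one_sub_self, he.one_sub_mul_self, zero_kronecker, add_zero, zero_add]
  map_zero' := by simp
  map_add' x y := by simp only [Prod.fst_add, Prod.snd_add, kronecker_add]; abel

theorem continuous_kroneckerIdempotentRingHom {R : Type*} [CommRing R] [TopologicalSpace R]
    [IsTopologicalRing R] (e : Matrix m m R) (he : IsIdempotentElem e) :
    Continuous (kroneckerIdempotentRingHom (n := n) e he) := by
  change Continuous fun x : Matrix n n R × Matrix n n R => e ⊗ₖ x.1 + (1 - e) ⊗ₖ x.2
  unfold kroneckerMap
  fun_prop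

variable {𝕜 : Type*} [RCLike 𝕜]

theorem exp_kronecker_add_one_sub_kronecker_s14 {e : Matrix m m 𝕜} (he : IsIdempotentElem e)
    (a b : Matrix n n 𝕜) :
    exp (e ⊗ₖ a + (1 - e) ⊗ₖ b) = e ⊗ₖ exp a + (1 - e) ⊗ₖ exp b := by
  let : NormedRing (Matrix n n 𝕜) := Matrix.linftyOpNormedRing
  let : NormedAlgebra 𝕜 (Matrix n n 𝕜) := Matrix.linftyOpNormedAlgebra
  let : NormedAlgebra ℚ (Matrix n n 𝕜) := Matrix.linftyOpNormedAlgebra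
  let : NormedRing (Matrix (m × n) (m × n) 𝕜) := Matrix.linftyOpNormedRing
  -- The uniformity of this norm is not reducibly the product one, so instance search misses it.
  have : @CompleteSpace (Matrix n n 𝕜) PseudoMetricSpace.toUniformSpace :=
    FiniteDimensional.complete 𝕜 _
  have := map_exp (kroneckerIdempotentRingHom e he)
    (continuous_kroneckerIdempotentRingHom e he) (a, b)
  simp only [kroneckerIdempotentRingHom, RingHom.coe_mk, MonoidHom.coe_mk, OneHom.coe_mk,
    Prod.fst_exp, Prod.snd_exp] at this
  exact this.symm

theorem exp_kronecker_of_mul_self_eq_one {P : Matrix m m 𝕜} (hP : P * P = 1)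
    (M : Matrix n n 𝕜) :
    exp (P ⊗ₖ M) =
      ((2⁻¹ : 𝕜) • (1 + P)) ⊗ₖ exp M + (1 - (2⁻¹ : 𝕜) • (1 + P)) ⊗ₖ exp (-M) := by
  have he : IsIdempotentElem ((2⁻¹ : 𝕜) • (1 + P)) := by
    have hsq : (1 + P) * (1 + P) = (2 : 𝕜) • (1 + P) := by
      rw [add_mul, mul_add, mul_add, hP, one_mul, mul_one, one_mul, two_smul]
      abel
    rw [IsIdempotentElem, smul_mul_smul_comm, hsq, smul_smul]
    norm_num
  rw [← exp_kronecker_add_one_sub_kronecker_s14 he]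
  congr 1
  ext ⟨i, j⟩ ⟨k, l⟩
  simp only [kroneckerMap_apply, add_apply, sub_apply, smul_apply, neg_apply, smul_eq_mul]
  ring

theorem exp_kronecker_apply_self_of_mul_self_eq_one {P : Matrix m m 𝕜} (hP : P * P = 1)
    {i : m} (hPi : P i i = 0) (M : Matrix n n 𝕜) (j : n) :
    exp (P ⊗ₖ M) (i, j) (i, j) = 2⁻¹ * (exp M j j + exp (-M) j j) := by
  rw [exp_kronecker_of_mul_self_eq_one hP]
  simp only [add_apply, kroneckerMap_apply, sub_apply, smul_apply, one_apply_eq, hPi]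
  ring

theorem exp_map_star {𝔸 : Type*} [CommRing 𝔸] [StarRing 𝔸] [TopologicalSpace 𝔸]
    [IsTopologicalRing 𝔸] [Algebra ℚ 𝔸] [T2Space 𝔸] [ContinuousStar 𝔸]
    (A : Matrix m m 𝔸) :
    exp (A.map star) = (exp A).map star := by
  rw [← conjTranspose_transpose, exp_transpose, exp_conjTranspose, conjTranspose_transpose]

end Matrix

theorem map_conj_qwU {V : Type*} [Fintype V] [DecidableEq V] (M : Matrix V V ℝ) (t : ℝ) :
    (qwU M t).map (starRingEnd ℂ) = qwU M (-t) := by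
  have hX : ((Complex.I * t) • M.map (↑· : ℝ → ℂ)).map (starRingEnd ℂ) =
      (Complex.I * ↑(-t)) • M.map (↑· : ℝ → ℂ) := by
    ext i j
    simp
  rw [qwU, qwU, ← hX]
  exact (Matrix.exp_map_star _).symm

theorem qwU_kronecker_apply_self {m V : Type*} [Fintype m] [DecidableEq m] [Fintype V]
    [DecidableEq V] {P : Matrix m m ℝ} (hP : P * P = 1) {i : m} (hPi : P i i = 0)
    (A : Matrix V V ℝ) (t : ℝ) (v : V) :
    qwU (P ⊗ₖ A) t (i, v) (i, v) = ((qwU A t v v).re : ℂ) := by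
  have hPC : P.map (↑· : ℝ → ℂ) * P.map (↑· : ℝ → ℂ) = 1 := by
    have h := congrArg (Matrix.map · Complex.ofRealHom) hP
    simp only [Matrix.map_mul, Matrix.map_one _ (map_zero _) (map_one _)] at h
    exact h
  have hX : (Complex.I * t) • (P ⊗ₖ A).map (↑· : ℝ → ℂ) =
      P.map (↑· : ℝ → ℂ) ⊗ₖ ((Complex.I * t) • A.map (↑· : ℝ → ℂ)) := by
    ext ⟨a, b⟩ ⟨c, d⟩
    simp only [Matrix.smul_apply, Matrix.map_apply, Matrix.kroneckerMap_apply, smul_eq_mul,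
      Complex.ofReal_mul]
    ring
  have hneg : -((Complex.I * t) • A.map (↑· : ℝ → ℂ)) =
      (Complex.I * ↑(-t)) • A.map (↑· : ℝ → ℂ) := by
    rw [← neg_smul, Complex.ofReal_neg, mul_neg]
  rw [qwU, hX, Matrix.exp_kronecker_apply_self_of_mul_self_eq_one hPC (by simp [hPi]), hneg,
    ← qwU, ← qwU, ← map_conj_qwU, Matrix.map_apply, Complex.add_conj]
  push_cast
  ring

theorem completeAdj_two_mul_self : completeAdj 2 * completeAdj 2 = 1 := by
  ext i j
  fin_cases i <;> fin_cases j <;> simp [completeAdj, Matrix.mul_apply, Fin.sum_univ_two]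

theorem completeAdj_apply_self (m : ℕ) (i : Fin m) : completeAdj m i i = 0 := by
  simp [completeAdj]

theorem bipartite_double_diagonal_general {V : Type*} [Fintype V] [DecidableEq V]
    (A : Matrix V V ℝ) :
    (∀ (u : Fin 2) (v : V) (t : ℝ),
      ‖qwU (completeAdj 2 ⊗ₖ A) t (u, v) (u, v)‖ = |(qwU A t v v).re|) ∧
    (∀ (u : Fin 2) (v : V) (C : ℝ),
      (∀ t > (0 : ℝ), C ≤ ‖qwU (completeAdj 2 ⊗ₖ A) t (u, v) (u, v)‖) ↔
        (∀ t > (0 : ℝ), C ≤ |(qwU A t v v).re|)) := by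
  have hentry : ∀ (u : Fin 2) (v : V) (t : ℝ),
      ‖qwU (completeAdj 2 ⊗ₖ A) t (u, v) (u, v)‖ = |(qwU A t v v).re| := fun u v t => by
    rw [qwU_kronecker_apply_self completeAdj_two_mul_self (completeAdj_apply_self 2 u),
      Complex.norm_real, Real.norm_eq_abs]
  exact ⟨hentry, fun u v C => by simp only [hentry]⟩

/-- For the bipartite double `K_2 × Y` (adjacency matrix `A(K_2) ⊗ A(Y)`), the diagonal
entries of the transition matrix satisfy
`|U(t)_{(u,v),(u,v)}| = |Re(U_{A(Y)}(t)_{v,v})|` for all `t`; consequently `K_2 × Y` is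
`C`-sedentary at `(u,v)` if and only if `|Re(U_{A(Y)}(t)_{v,v})| ≥ C` for all `t > 0`. -/
theorem bipartite_double_diagonal {V : Type*} [Fintype V] [DecidableEq V]
    (A : Matrix V V ℝ) (hA : A.IsSymm) :
    (∀ (u : Fin 2) (v : V) (t : ℝ),
      ‖qwU (completeAdj 2 ⊗ₖ A) t (u, v) (u, v)‖ = |(qwU A t v v).re|) ∧
    (∀ (u : Fin 2) (v : V) (C : ℝ),
      (∀ t > (0 : ℝ), C ≤ ‖qwU (completeAdj 2 ⊗ₖ A) t (u, v) (u, v)‖) ↔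
        (∀ t > (0 : ℝ), C ≤ |(qwU A t v v).re|)) :=
  bipartite_double_diagonal_general A
end

section
/- Let n ≥ 1 and for each j ∈ [n] = {1,…,n} let m_j ≥ 2 be an integer. Let X = K_{m_1} × … × K_{m_n} be the direct product of complete graphs, with adjacency matrix A(K_{m_1}) ⊗ … ⊗ A(K_{m_n}) and transition matrix U_X(t). Then for every vertex (v_1,…,v_n) of X, U_X(t)_{((v_1,…,v_n),(v_1,…,v_n))} = (1/∏_{j∈[n]} m_j) · Σ_{S ⊆ [n]} (∏_{j∈S}(m_j−1)) · exp(i t (−1)^{|S|} ∏_{j∉S}(m_j−1)), where an empty product equals 1. -/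
/-- The adjacency matrix of the direct product `K_{m 0} × ⋯ × K_{m (n-1)}` of complete
graphs: the Kronecker product of the matrices `J_{m j} - I_{m j}`, i.e. the entry at
`(v, w)` is `∏ j, (if v j = w j then 0 else 1)`. -/
def prodCompleteAdj {n : ℕ} (m : Fin n → ℕ) :
    Matrix ((j : Fin n) → Fin (m j)) ((j : Fin n) → Fin (m j)) ℝ :=
  Matrix.of fun v w => ∏ j, (if v j = w j then 0 else 1)

/-! With `P = J/m` the averaging projection, `A(K_m) = (m - 1) P - (1 - P)`. Expanding the
Kronecker product, `A(X) = ∑_S (-1)^|S| ∏_{j ∉ S} (m_j - 1) E_S`, where `E_S` is the Kronecker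
product of the factors `1 - P_j` for `j ∈ S` and `P_j` for `j ∉ S`. These `E_S` form a complete
family of orthogonal idempotents, so `exp (itA) = ∑_S exp (itλ_S) E_S`, and the diagonal entries
of `E_S` are `∏_{j ∈ S} (m_j - 1) / ∏_j m_j`. -/

open Finset SimpleGraph

theorem Fintype.prod_ite_mem_eq_mul_prod_compl {ι M : Type*} [Fintype ι] [DecidableEq ι]
    [CommMonoid M] (S : Finset ι) (f g : ι → M) :
    ∏ j, (if j ∈ S then f j else g j) = (∏ j ∈ S, f j) * ∏ j ∈ Sᶜ, g j := by
  rw [prod_ite, filter_univ_mem, ← compl_filter, filter_univ_mem]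

section Exp

variable {ι 𝕜 𝔸 : Type*} [Fintype ι] [RCLike 𝕜] [NormedRing 𝔸] [NormedAlgebra 𝕜 𝔸] [Algebra ℚ 𝔸]

def CompleteOrthogonalIdempotents.piAlgHom {e : ι → 𝔸} (he : CompleteOrthogonalIdempotents e) :
    (ι → 𝕜) →ₐ[𝕜] 𝔸 where
  toFun c := ∑ i, c i • e i
  map_one' := by simpa using he.complete
  map_mul' c d := by
    classical
    simp only [Pi.mul_apply, sum_mul_sum, smul_mul_smul_comm, he.mul_eq, smul_ite, smul_zero,
      sum_ite_eq, mem_univ, if_true, mul_smul]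
  map_zero' := by simp
  map_add' c d := by simp [add_smul, sum_add_distrib]
  commutes' a := by simp [Algebra.algebraMap_eq_smul_one, ← smul_sum, he.complete]

theorem CompleteOrthogonalIdempotents.exp_sum_smul {e : ι → 𝔸}
    (he : CompleteOrthogonalIdempotents e) (c : ι → 𝕜) :
    NormedSpace.exp (∑ i, c i • e i) = ∑ i, NormedSpace.exp (c i) • e i := by
  have hcont : Continuous (he.piAlgHom (𝕜 := 𝕜)) :=
    LinearMap.continuous_of_finiteDimensional (he.piAlgHom (𝕜 := 𝕜)).toLinearMap
  calc NormedSpace.exp (∑ i, c i • e i) = NormedSpace.exp (he.piAlgHom c) := rfl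
    _ = he.piAlgHom (NormedSpace.exp c) := (NormedSpace.map_exp _ hcont c).symm
    _ = ∑ i, NormedSpace.exp (c i) • e i := by rw [Pi.exp_def]; rfl

end Exp

theorem CompleteOrthogonalIdempotents.matrix_exp_sum_smul {ι 𝕜 V : Type*} [Fintype ι] [RCLike 𝕜]
    [Fintype V] [DecidableEq V] {e : ι → Matrix V V 𝕜} (he : CompleteOrthogonalIdempotents e)
    (c : ι → 𝕜) : NormedSpace.exp (∑ i, c i • e i) = ∑ i, NormedSpace.exp (c i) • e i := by
  -- `exp` depends only on the topology, which this norm induces.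
  let := Matrix.linftyOpNormedRing (n := V) (α := 𝕜)
  let := Matrix.linftyOpNormedAlgebra (n := V) (R := 𝕜) (α := 𝕜)
  exact he.exp_sum_smul c

namespace Matrix

section PiKronecker

variable {ι R : Type*} [Fintype ι] {α : ι → Type*} [CommRing R]

def piKronecker (M : ∀ j, Matrix (α j) (α j) R) : Matrix (∀ j, α j) (∀ j, α j) R :=
  of fun v w => ∏ j, M j (v j) (w j)

@[simp]
theorem piKronecker_apply (M : ∀ j, Matrix (α j) (α j) R) (v w : ∀ j, α j) :
    piKronecker M v w = ∏ j, M j (v j) (w j) := rfl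

theorem piKronecker_smul (c : ι → R) (M : ∀ j, Matrix (α j) (α j) R) :
    piKronecker (fun j => c j • M j) = (∏ j, c j) • piKronecker M := by
  ext v w
  simp [prod_mul_distrib]

theorem piKronecker_eq_zero {M : ∀ j, Matrix (α j) (α j) R} (j : ι) (hj : M j = 0) :
    piKronecker M = 0 := by
  ext v w
  simp only [piKronecker_apply, zero_apply]
  exact prod_eq_zero (mem_univ j) (by simp [hj])

theorem piKronecker_one [∀ j, DecidableEq (α j)] :
    piKronecker (fun j => (1 : Matrix (α j) (α j) R)) = 1 := by
  ext v w
  simp only [piKronecker_apply, one_apply, Fintype.prod_boole, funext_iff]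

variable [DecidableEq ι]

theorem piKronecker_mul [∀ j, Fintype (α j)] (M N : ∀ j, Matrix (α j) (α j) R) :
    piKronecker (fun j => M j * N j) = piKronecker M * piKronecker N := by
  ext v w
  simp only [piKronecker_apply, mul_apply, ← prod_mul_distrib]
  exact Fintype.prod_sum fun j x => M j (v j) x * N j x (w j)

theorem piKronecker_add (M N : ∀ j, Matrix (α j) (α j) R) :
    piKronecker (fun j => M j + N j) =
      ∑ S : Finset ι, piKronecker fun j => if j ∈ S then M j else N j := by
  ext v w
  simp only [piKronecker_apply, add_apply, sum_apply, Fintype.prod_add,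
    ← Fintype.prod_ite_mem_eq_mul_prod_compl]
  refine sum_congr rfl fun S _ => prod_congr rfl fun j _ => ?_
  split_ifs <;> rfl

variable [∀ j, DecidableEq (α j)]

def piKroneckerOneSubOn (P : ∀ j, Matrix (α j) (α j) R) (S : Finset ι) :
    Matrix (∀ j, α j) (∀ j, α j) R :=
  piKronecker fun j => if j ∈ S then 1 - P j else P j

theorem piKronecker_smul_add_smul_one_sub (a b : ι → R) (P : ∀ j, Matrix (α j) (α j) R) :
    piKronecker (fun j => a j • P j + b j • (1 - P j)) =
      ∑ S : Finset ι, ((∏ j ∈ S, b j) * ∏ j ∈ Sᶜ, a j) • piKroneckerOneSubOn P S := by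
  rw [funext fun j => add_comm (a j • P j) _, piKronecker_add]
  refine sum_congr rfl fun S _ => ?_
  rw [piKroneckerOneSubOn, ← Fintype.prod_ite_mem_eq_mul_prod_compl, ← piKronecker_smul]
  congr! 2 with j
  split_ifs <;> rfl

theorem completeOrthogonalIdempotents_piKroneckerOneSubOn [∀ j, Fintype (α j)]
    {P : ∀ j, Matrix (α j) (α j) R} (hP : ∀ j, IsIdempotentElem (P j)) :
    CompleteOrthogonalIdempotents (piKroneckerOneSubOn P) where
  idem S := by
    rw [IsIdempotentElem, piKroneckerOneSubOn, ← piKronecker_mul]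
    congr! 2 with j
    split_ifs
    exacts [(hP j).one_sub.eq, (hP j).eq]
  ortho S T hST := by
    obtain ⟨j, hj⟩ : ∃ j, ¬(j ∈ S ↔ j ∈ T) := by
      by_contra! h
      exact hST (Finset.ext h)
    rw [piKroneckerOneSubOn, piKroneckerOneSubOn, ← piKronecker_mul]
    refine piKronecker_eq_zero j ?_
    by_cases hS : j ∈ S
    · simp [hS, show j ∉ T by tauto, (hP j).one_sub_mul_self]
    · simp [hS, show j ∈ T by tauto, (hP j).mul_one_sub_self]
  complete := by
    simp_rw [piKroneckerOneSubOn, ← piKronecker_add, sub_add_cancel]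
    exact piKronecker_one

end PiKronecker

section Averaging

variable (α K : Type*) [Fintype α] [Field K]

def averaging : Matrix α α K := (Fintype.card α : K)⁻¹ • of 1

variable {α K}

@[simp]
theorem averaging_apply (a b : α) : averaging α K a b = (Fintype.card α : K)⁻¹ := by
  simp [averaging]

theorem isIdempotentElem_averaging (h : (Fintype.card α : K) ≠ 0) :
    IsIdempotentElem (averaging α K) := by
  ext a b
  simp only [mul_apply, averaging_apply, sum_const, card_univ, nsmul_eq_mul]
  field_simp

theorem adjMatrix_completeGraph_eq_averaging [DecidableEq α] (h : (Fintype.card α : K) ≠ 0) :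
    (completeGraph α).adjMatrix K =
      ((Fintype.card α : K) - 1) • averaging α K + (-1 : K) • (1 - averaging α K) := by
  rw [SimpleGraph.adjMatrix_completeGraph_eq_of_one_sub_one, averaging, smul_smul, sub_mul,
    mul_inv_cancel₀ h, one_mul]
  module

theorem piKroneckerOneSubOn_averaging_apply_self {ι : Type*} [Fintype ι] [DecidableEq ι]
    {α : ι → Type*} [∀ j, Fintype (α j)] [∀ j, DecidableEq (α j)]
    (h : ∀ j, (Fintype.card (α j) : K) ≠ 0) (S : Finset ι) (v : ∀ j, α j) :
    piKroneckerOneSubOn (fun j => averaging (α j) K) S v v =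
      (∏ j ∈ S, ((Fintype.card (α j) : K) - 1)) * (∏ j, (Fintype.card (α j) : K))⁻¹ := by
  calc _ = ∏ j, if j ∈ S then ((Fintype.card (α j) : K) - 1) * (Fintype.card (α j) : K)⁻¹
          else (Fintype.card (α j) : K)⁻¹ := by
        refine prod_congr rfl fun j _ => ?_
        split_ifs with hj
        · simp [hj, sub_mul, mul_inv_cancel₀ (h j)]
        · simp [hj]
    _ = _ := by
      rw [Fintype.prod_ite_mem_eq_mul_prod_compl, prod_mul_distrib, mul_assoc,
        prod_mul_prod_compl, prod_inv_distrib]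

end Averaging

end Matrix

open Matrix

theorem prodCompleteAdj_map_ofReal {n : ℕ} (m : Fin n → ℕ) :
    (prodCompleteAdj m).map ((↑) : ℝ → ℂ) =
      piKronecker fun j => (completeGraph (Fin (m j))).adjMatrix ℂ := by
  ext v w
  simp [prodCompleteAdj, apply_ite ((↑) : ℝ → ℂ)]

theorem prod_complete_diagonal_general {n : ℕ} (m : Fin n → ℕ)
    (hm : ∀ j, 2 ≤ m j) (v : (j : Fin n) → Fin (m j)) (t : ℝ) :
    qwU (prodCompleteAdj m) t v v =
      (∏ j, (m j : ℂ))⁻¹ *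
        ∑ S : Finset (Fin n),
          (∏ j ∈ S, ((m j : ℂ) - 1)) *
            Complex.exp (Complex.I * (t : ℂ) * (-1) ^ S.card * ∏ j ∈ Sᶜ, ((m j : ℂ) - 1)) := by
  have hm0 (j : Fin n) : (Fintype.card (Fin (m j)) : ℂ) ≠ 0 := by
    have := hm j
    rw [Fintype.card_fin, Nat.cast_ne_zero]
    omega
  have hE : CompleteOrthogonalIdempotents
      (piKroneckerOneSubOn fun j => averaging (Fin (m j)) ℂ) :=
    completeOrthogonalIdempotents_piKroneckerOneSubOn fun j => isIdempotentElem_averaging (hm0 j)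
  have hA : (prodCompleteAdj m).map ((↑) : ℝ → ℂ) =
      ∑ S, ((-1) ^ S.card * ∏ j ∈ Sᶜ, ((m j : ℂ) - 1)) •
        piKroneckerOneSubOn (fun j => averaging (Fin (m j)) ℂ) S := by
    simp_rw [prodCompleteAdj_map_ofReal, adjMatrix_completeGraph_eq_averaging (hm0 _),
      piKronecker_smul_add_smul_one_sub, prod_const, Fintype.card_fin]
  rw [qwU, hA, smul_sum]
  simp only [smul_smul]
  rw [hE.matrix_exp_sum_smul, Matrix.sum_apply, mul_sum]
  refine sum_congr rfl fun S _ => ?_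
  rw [Matrix.smul_apply, smul_eq_mul, piKroneckerOneSubOn_averaging_apply_self hm0,
    ← Complex.exp_eq_exp_ℂ]
  simp only [Fintype.card_fin, ← mul_assoc]
  ring

/-- The diagonal entries of the transition matrix of a direct product of complete graphs
`K_{m_1} × ⋯ × K_{m_n}` (each `m_j ≥ 2`, `n ≥ 1`):
`U(t)_{v,v} = (1/∏ m_j) ∑_{S ⊆ [n]} (∏_{j ∈ S} (m_j - 1)) e^{it(-1)^{|S|} ∏_{j ∉ S}(m_j - 1)}`,
with empty products equal to `1`. -/
theorem prod_complete_diagonal {n : ℕ} (hn : 1 ≤ n) (m : Fin n → ℕ)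
    (hm : ∀ j, 2 ≤ m j) (v : (j : Fin n) → Fin (m j)) (t : ℝ) :
    qwU (prodCompleteAdj m) t v v =
      (∏ j, (m j : ℂ))⁻¹ *
        ∑ S : Finset (Fin n),
          (∏ j ∈ S, ((m j : ℂ) - 1)) *
            Complex.exp (Complex.I * (t : ℂ) * (-1) ^ S.card * ∏ j ∈ Sᶜ, ((m j : ℂ) - 1)) :=
  prod_complete_diagonal_general m hm v t
end
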